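/- arXiv:1810.02957 — 2 statements merged into one kernel-verified Lean document; each statement's English description precedes it below -/
import Mathlib

section
/- Suppose a self-adjoint operator A_m (depending on a parameter m > 0) satisfies, for all φ in its domain, ‖A_m φ‖² = ‖Tφ‖² + m²‖φ‖² + m·q(φ) with q(φ) ≥ 0 and ‖Tφ‖² ≥ 0. Then for ξ = η + iμ with |μ| ≥ μ₀, |η| ≤ ρ, and m > 2√|μ₀² - 2ρ²|, one has ‖(A_m - ξ)φ‖² ≥ (m/2)q(φ) + (m²/4)‖φ‖². Consequently ‖(A_m - ξ)⁻¹h‖ ≤ (2/m)‖h‖ and q((A_m - ξ)⁻¹h) ≤ (2/m)‖h‖² for all h. -/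
open scoped InnerProductSpace

/-!
For symmetric `A`, `‖(A - ξ)φ‖² = ‖Aφ‖² - 2 Re ξ ⟪Aφ, φ⟫ + |ξ|²‖φ‖²`, and absorbing the cross term
by `2ρab ≤ a²/2 + 2ρ²b²` gives `‖(A - ξ)φ‖² ≥ ‖Aφ‖²/2 + (μ₀² - 2ρ²)‖φ‖²`. Feeding in the
identity for `‖Aφ‖²` leaves `(m/2) q(φ) + (m²/2 + μ₀² - 2ρ²)‖φ‖²`, and the mass condition
guarantees `m²/2 + μ₀² - 2ρ² > m²/4`. The resolvent bounds are read off with `h = (A - ξ)φ`.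
-/

namespace LinearMap.IsSymmetric

variable {𝕜 E : Type*} [RCLike 𝕜] [NormedAddCommGroup E] [InnerProductSpace 𝕜 E]
  {A : E →ₗ[𝕜] E}

open RCLike

theorem norm_apply_sub_smul_sq (hA : A.IsSymmetric) (ξ : 𝕜) (φ : E) :
    ‖A φ - ξ • φ‖ ^ 2 = ‖A φ‖ ^ 2 - 2 * re ξ * re ⟪A φ, φ⟫_𝕜 + ‖ξ‖ ^ 2 * ‖φ‖ ^ 2 := by
  rw [@norm_sub_sq 𝕜, inner_smul_right, ← hA.coe_re_inner_apply_self φ, re_mul_ofReal, ofReal_re,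
    norm_smul, mul_pow]
  ring

theorem half_norm_apply_sq_add_le_norm_apply_sub_smul_sq (hA : A.IsSymmetric) (ξ : 𝕜) (φ : E) :
    ‖A φ‖ ^ 2 / 2 + (im ξ ^ 2 - 2 * re ξ ^ 2) * ‖φ‖ ^ 2 ≤ ‖A φ - ξ • φ‖ ^ 2 := by
  have cauchy_schwarz : |re ⟪A φ, φ⟫_𝕜| ≤ ‖A φ‖ * ‖φ‖ :=
    (abs_re_le_norm _).trans (norm_inner_le_norm _ _)
  have cross_term : re ξ * re ⟪A φ, φ⟫_𝕜 ≤ |re ξ| * (‖A φ‖ * ‖φ‖) := by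
    calc re ξ * re ⟪A φ, φ⟫_𝕜 ≤ |re ξ| * |re ⟪A φ, φ⟫_𝕜| :=
          (le_abs_self _).trans (abs_mul _ _).le
      _ ≤ |re ξ| * (‖A φ‖ * ‖φ‖) := mul_le_mul_of_nonneg_left cauchy_schwarz (abs_nonneg _)
  rw [hA.norm_apply_sub_smul_sq, norm_sq_eq_def]
  nlinarith [sq_nonneg (‖A φ‖ - 2 * |re ξ| * ‖φ‖), sq_abs (re ξ), sq_nonneg (re ξ)]

end LinearMap.IsSymmetric

theorem lt_sq_div_four_of_two_mul_sqrt_abs_lt {c m : ℝ} (h : 2 * √|c| < m) :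
    0 < m ∧ |c| < m ^ 2 / 4 := by
  have hm : 0 < m := (by positivity : 0 ≤ 2 * √|c|).trans_lt h
  refine ⟨hm, ?_⟩
  have := (Real.sqrt_lt' (half_pos hm)).1 (show √|c| < m / 2 by linarith)
  linarith

theorem le_two_div_mul_of_sq_lower_bound {m q a b : ℝ} (hm : 0 < m) (hq : 0 ≤ q) (hb : 0 ≤ b)
    (h : m / 2 * q + m ^ 2 / 4 * a ^ 2 ≤ b ^ 2) :
    a ≤ 2 / m * b ∧ q ≤ 2 / m * b ^ 2 := by
  rw [div_mul_eq_mul_div, le_div_iff₀ hm, div_mul_eq_mul_div, le_div_iff₀ hm]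
  constructor
  · nlinarith
  · nlinarith

theorem mass_resolvent_estimates_general
    {H : Type*} [NormedAddCommGroup H] [InnerProductSpace ℂ H]
    (A : H →ₗ[ℂ] H) (hA : A.IsSymmetric)
    (m : ℝ) (t q : H → ℝ) (ht : ∀ φ, 0 ≤ t φ) (hq : ∀ φ, 0 ≤ q φ)
    (hsq : ∀ φ, ‖A φ‖ ^ 2 = t φ + m ^ 2 * ‖φ‖ ^ 2 + m * q φ)
    (η μ μ₀ ρ : ℝ) (hμ₀ : 0 < μ₀) (hμ : μ₀ ≤ |μ|) (hη : |η| ≤ ρ)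
    (hm : m > 2 * Real.sqrt |μ₀ ^ 2 - 2 * ρ ^ 2|) :
    (∀ φ : H,
      ‖A φ - (((η : ℂ) + (μ : ℂ) * Complex.I) : ℂ) • φ‖ ^ 2 ≥
        (m / 2) * q φ + (m ^ 2 / 4) * ‖φ‖ ^ 2) ∧
    (∀ h φ : H, A φ - (((η : ℂ) + (μ : ℂ) * Complex.I) : ℂ) • φ = h →
      ‖φ‖ ≤ (2 / m) * ‖h‖ ∧ q φ ≤ (2 / m) * ‖h‖ ^ 2) := by
  obtain ⟨hm_pos, hm_mass⟩ := lt_sq_div_four_of_two_mul_sqrt_abs_lt hm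
  set ξ : ℂ := (η : ℂ) + (μ : ℂ) * Complex.I
  have hξ : RCLike.re ξ = η ∧ RCLike.im ξ = μ := by simp [ξ]
  have coeff : m ^ 2 / 4 ≤ m ^ 2 / 2 + (μ ^ 2 - 2 * η ^ 2) := by
    have hη2 : η ^ 2 ≤ ρ ^ 2 := sq_le_sq.mpr (hη.trans (le_abs_self ρ))
    have hμ2 : μ₀ ^ 2 ≤ μ ^ 2 := sq_le_sq.mpr (by rwa [abs_of_pos hμ₀])
    linarith [neg_abs_le (μ₀ ^ 2 - 2 * ρ ^ 2)]
  have lower : ∀ φ : H, ‖A φ - ξ • φ‖ ^ 2 ≥ (m / 2) * q φ + (m ^ 2 / 4) * ‖φ‖ ^ 2 := by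
    intro φ
    have absorbed := hA.half_norm_apply_sq_add_le_norm_apply_sub_smul_sq ξ φ
    rw [hξ.1, hξ.2, hsq φ] at absorbed
    nlinarith [ht φ, mul_le_mul_of_nonneg_right coeff (sq_nonneg ‖φ‖)]
  exact ⟨lower, fun h φ hφ =>
    le_two_div_mul_of_sq_lower_bound hm_pos (hq φ) (norm_nonneg h) (hφ ▸ lower φ)⟩

/-- Abstract version of Lemma 3.3: if a symmetric operator `A_m` satisfies
`‖A_m φ‖² = t(φ) + m²‖φ‖² + m q(φ)` with `t, q ≥ 0`, then for `ξ = η + iμ` with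
`|μ| ≥ μ₀`, `|η| ≤ ρ` and `m > 2√|μ₀² - 2ρ²|`, one has
`‖(A_m - ξ)φ‖² ≥ (m/2) q(φ) + (m²/4)‖φ‖²`; consequently
`‖(A_m - ξ)⁻¹ h‖ ≤ (2/m)‖h‖` and `q((A_m - ξ)⁻¹ h) ≤ (2/m)‖h‖²`. -/
theorem mass_resolvent_estimates
    {H : Type*} [NormedAddCommGroup H] [InnerProductSpace ℂ H] [CompleteSpace H]
    (A : H →ₗ[ℂ] H) (hA : A.IsSymmetric)
    (m : ℝ) (t q : H → ℝ) (ht : ∀ φ, 0 ≤ t φ) (hq : ∀ φ, 0 ≤ q φ)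
    (hsq : ∀ φ, ‖A φ‖ ^ 2 = t φ + m ^ 2 * ‖φ‖ ^ 2 + m * q φ)
    (η μ μ₀ ρ : ℝ) (hμ₀ : 0 < μ₀) (hμ : μ₀ ≤ |μ|) (hη : |η| ≤ ρ)
    (hm : m > 2 * Real.sqrt |μ₀ ^ 2 - 2 * ρ ^ 2|) :
    (∀ φ : H,
      ‖A φ - (((η : ℂ) + (μ : ℂ) * Complex.I) : ℂ) • φ‖ ^ 2 ≥
        (m / 2) * q φ + (m ^ 2 / 4) * ‖φ‖ ^ 2) ∧
    (∀ h φ : H, A φ - (((η : ℂ) + (μ : ℂ) * Complex.I) : ℂ) • φ = h →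
      ‖φ‖ ≤ (2 / m) * ‖h‖ ∧ q φ ≤ (2 / m) * ‖h‖ ^ 2) :=
  mass_resolvent_estimates_general A hA m t q ht hq hsq η μ μ₀ ρ hμ₀ hμ hη hm
end

section
/- Let A and B be self-adjoint operators on Hilbert spaces H and H₀ ⊂ H respectively (B extended by 0 on H₀^⊥), let K be a compact subset of the resolvent set of B with μ₀ > max_{z∈K}|Im z| and ρ > 0. Suppose sup over ξ with |Im ξ| ≥ μ₀, |Re ξ| ≤ ρ of ‖(A-ξ)⁻¹ - (B-ξ)⁻¹ ⊕ 0‖ ≤ C'/√m. Then there exists m₀ such that for m > m₀ every z ∈ K lies in the resolvent set of A, and sup_{z∈K} ‖(A-z)⁻¹ - (B-z)⁻¹ ⊕ 0‖ ≤ C/√m for some constant C depending only on K, μ₀, ρ, C'. -/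
/-!
Write `D(η) = (A - η)⁻¹ - J (B - η)⁻¹ J*`. Since `J* J = 1`, the map `η ↦ J (B - η)⁻¹ J*` satisfies
the first resolvent identity, and comparing it with the resolvent identity of `A` shows: if `M`
bounds `‖(B - ·)⁻¹‖` near `η`, `‖D(η)‖ ≤ 1` and `|ζ - η| (M + 1) ≤ 1/2`, then `A - ζ` is
invertible and `‖D(ζ)‖ ≤ 4 ‖D(η)‖`. Every `z ∈ K` is joined to `±iμ₀`, where `‖D‖ ≤ C'/√m`, by a
segment lying in a fixed compact subset of the resolvent set of `B` (each point is either close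
to `K` or bounded away from the real axis), so a fixed number `N` of such steps reaches `z`, and
`C = 4 ^ N max C' 0` works.
-/

open ContinuousLinearMap Metric Complex

section PseudoResolvent

variable {R : Type*}

def IsPseudoResolventOn [Ring R] [Algebra ℂ R] (g : ℂ → R) (S : Set ℂ) : Prop :=
  ∀ η ∈ S, ∀ ζ ∈ S, g ζ - g η = (ζ - η) • (g ζ * g η)

section Algebra

variable [Ring R] [Algebra ℂ R]

theorem isPseudoResolventOn_inverse_sub_smul (a : R) :
    IsPseudoResolventOn (fun η : ℂ => Ring.inverse (a - η • 1)) {η | IsUnit (a - η • 1)} := by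
  intro η hη ζ hζ
  calc Ring.inverse (a - ζ • 1) - Ring.inverse (a - η • 1)
      = Ring.inverse (a - ζ • 1) * ((a - η • 1) - (a - ζ • 1)) * Ring.inverse (a - η • 1) := by
        rw [mul_sub, sub_mul, mul_assoc, Ring.mul_inverse_cancel _ hη,
          Ring.inverse_mul_cancel _ hζ, mul_one, one_mul]
    _ = (ζ - η) • (Ring.inverse (a - ζ • 1) * Ring.inverse (a - η • 1)) := by
        rw [sub_sub_sub_cancel_left, ← sub_smul, mul_smul_one, smul_mul_assoc]

theorem IsPseudoResolventOn.sub_eq_sub_add_smul {f g : ℂ → R} {S : Set ℂ}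
    (hf : IsPseudoResolventOn f S) (hg : IsPseudoResolventOn g S) {η ζ : ℂ}
    (hη : η ∈ S) (hζ : ζ ∈ S) :
    f ζ - g ζ = (f η - g η) + (ζ - η) • (f ζ * (f η - g η) + (f ζ - g ζ) * g η) := by
  have hf' := hf η hη ζ hζ
  have hg' := hg η hη ζ hζ
  calc f ζ - g ζ = (f η - g η) + ((f ζ - f η) - (g ζ - g η)) := by abel
    _ = _ := by rw [hf', hg', ← smul_sub, mul_sub, sub_mul]; abel_nf

theorem IsPseudoResolventOn.conj {E F : Type*} [NormedAddCommGroup E] [NormedSpace ℂ E]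
    [NormedAddCommGroup F] [NormedSpace ℂ F] {g : ℂ → F →L[ℂ] F} {S : Set ℂ}
    (hg : IsPseudoResolventOn g S) (V : F →L[ℂ] E) (W : E →L[ℂ] F) (hWV : W ∘L V = 1) :
    IsPseudoResolventOn (fun η => V ∘L g η ∘L W) S := by
  intro η hη ζ hζ
  have hmul : (V ∘L g ζ ∘L W) * (V ∘L g η ∘L W) = V ∘L (g ζ * g η) ∘L W := by
    simp only [mul_def, comp_assoc]
    rw [← comp_assoc W V, hWV, one_def, id_comp]
  simp only [hmul, ← sub_comp, ← comp_sub, hg η hη ζ hζ, smul_comp, comp_smul]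

end Algebra

section Normed

variable [NormedRing R] [NormedAlgebra ℂ R]

theorem IsPseudoResolventOn.norm_le_two_mul {f : ℂ → R} {S : Set ℂ}
    (hf : IsPseudoResolventOn f S) {η ζ : ℂ} (hη : η ∈ S) (hζ : ζ ∈ S)
    (h : ‖ζ - η‖ * ‖f η‖ ≤ 1 / 2) : ‖f ζ‖ ≤ 2 * ‖f η‖ := by
  have hfζ : f ζ = f η + (ζ - η) • (f ζ * f η) := by rw [← hf η hη ζ hζ, add_sub_cancel]
  have : ‖f ζ‖ ≤ ‖f η‖ + ‖f ζ‖ / 2 :=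
    calc ‖f ζ‖ ≤ ‖f η‖ + ‖ζ - η‖ * (‖f ζ‖ * ‖f η‖) := by
          conv_lhs => rw [hfζ]
          refine (norm_add_le _ _).trans ?_
          gcongr
          exact (norm_smul_le _ _).trans (by gcongr; exact norm_mul_le _ _)
      _ ≤ ‖f η‖ + ‖f ζ‖ / 2 := by nlinarith [norm_nonneg (f ζ)]
  linarith

variable [CompleteSpace R]

theorem isOpen_setOf_isUnit_sub_smul (a : R) : IsOpen {η : ℂ | IsUnit (a - η • 1)} :=
  Units.isOpen.preimage (by fun_prop)

theorem IsCompact.exists_bound_norm_inverse_sub_smul {a : R} {S : Set ℂ} (hS : IsCompact S)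
    (ha : ∀ η ∈ S, IsUnit (a - η • 1)) : ∃ M, ∀ η ∈ S, ‖Ring.inverse (a - η • 1)‖ ≤ M := by
  refine hS.exists_bound_of_continuousOn fun η hη => ContinuousAt.continuousWithinAt ?_
  have hinv := NormedRing.inverse_continuousAt (ha η hη).unit
  rw [IsUnit.unit_spec] at hinv
  exact hinv.comp (f := fun η : ℂ => a - η • 1) (by fun_prop)

theorem IsUnit.sub_smul_of_norm_mul_lt {a : R} {η ζ : ℂ} (ha : IsUnit (a - η • 1))
    (h : ‖ζ - η‖ * ‖Ring.inverse (a - η • 1)‖ < 1) : IsUnit (a - ζ • 1) := by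
  have hfac : a - ζ • 1 = (a - η • 1) * (1 - (ζ - η) • Ring.inverse (a - η • 1)) := by
    rw [mul_sub, mul_one, mul_smul_comm, Ring.mul_inverse_cancel _ ha, sub_smul]
    abel
  rw [hfac]
  exact ha.mul (isUnit_one_sub_of_norm_lt_one ((norm_smul_le _ _).trans_lt h))

theorem IsPseudoResolventOn.isUnit_and_norm_inverse_sub_le_four_mul {a : R} {g : ℂ → R}
    {S : Set ℂ} (hg : IsPseudoResolventOn g S) {η ζ : ℂ} (hη : η ∈ S) (hζ : ζ ∈ S) {M : ℝ}
    (hgη : ‖g η‖ ≤ M) (ha : IsUnit (a - η • 1))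
    (hD : ‖Ring.inverse (a - η • 1) - g η‖ ≤ 1) (hstep : ‖ζ - η‖ * (M + 1) ≤ 1 / 2) :
    IsUnit (a - ζ • 1) ∧
      ‖Ring.inverse (a - ζ • 1) - g ζ‖ ≤ 4 * ‖Ring.inverse (a - η • 1) - g η‖ := by
  set f : ℂ → R := fun η => Ring.inverse (a - η • 1)
  set D := ‖f η - g η‖
  have hδ : 0 ≤ ‖ζ - η‖ := norm_nonneg _
  have hfη : ‖ζ - η‖ * ‖f η‖ ≤ 1 / 2 := by
    have : ‖f η‖ ≤ ‖g η‖ + D := norm_le_insert' _ _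
    nlinarith
  have ha' : IsUnit (a - ζ • 1) := ha.sub_smul_of_norm_mul_lt (by linarith)
  let U : Set ℂ := {η | IsUnit (a - η • 1)}
  have hf : IsPseudoResolventOn f (U ∩ S) := fun η hη ζ hζ =>
    isPseudoResolventOn_inverse_sub_smul a η hη.1 ζ hζ.1
  have hfg : IsPseudoResolventOn g (U ∩ S) := fun η hη ζ hζ => hg η hη.2 ζ hζ.2
  have hfζ : ‖ζ - η‖ * ‖f ζ‖ ≤ 1 := by
    have := hf.norm_le_two_mul ⟨ha, hη⟩ ⟨ha', hζ⟩ hfη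
    nlinarith
  have hgη' : ‖ζ - η‖ * ‖g η‖ ≤ 1 / 2 := by nlinarith [norm_nonneg (g η)]
  refine ⟨ha', ?_⟩
  have hid := hf.sub_eq_sub_add_smul hfg ⟨ha, hη⟩ ⟨ha', hζ⟩
  have : ‖f ζ - g ζ‖ ≤ D + ‖ζ - η‖ * (‖f ζ‖ * D + ‖f ζ - g ζ‖ * ‖g η‖) :=
    calc ‖f ζ - g ζ‖ ≤ D + ‖(ζ - η) • (f ζ * (f η - g η) + (f ζ - g ζ) * g η)‖ := by
          conv_lhs => rw [hid]
          exact norm_add_le _ _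
      _ ≤ D + ‖ζ - η‖ * (‖f ζ‖ * D + ‖f ζ - g ζ‖ * ‖g η‖) := by
          gcongr
          refine (norm_smul_le _ _).trans (mul_le_mul_of_nonneg_left ?_ hδ)
          exact (norm_add_le _ _).trans (add_le_add (norm_mul_le _ _) (norm_mul_le _ _))
  nlinarith [norm_nonneg (f ζ - g ζ), norm_nonneg (f η - g η)]

theorem IsPseudoResolventOn.isUnit_and_norm_inverse_sub_le_of_chain {a : R} {g : ℂ → R}
    {S : Set ℂ} (hg : IsPseudoResolventOn g S) {M ε : ℝ} (hgM : ∀ η ∈ S, ‖g η‖ ≤ M)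
    {p : ℕ → ℂ} {n : ℕ} (hpS : ∀ k ≤ n, p k ∈ S) (hp : ∀ k < n, ‖p (k + 1) - p k‖ * (M + 1) ≤ 1 / 2)
    (ha : IsUnit (a - p 0 • 1)) (hD : ‖Ring.inverse (a - p 0 • 1) - g (p 0)‖ ≤ ε)
    (hε : 4 ^ n * ε ≤ 1) :
    ∀ k ≤ n, IsUnit (a - p k • 1) ∧ ‖Ring.inverse (a - p k • 1) - g (p k)‖ ≤ 4 ^ k * ε := by
  have hε0 : 0 ≤ ε := (norm_nonneg _).trans hD
  intro k hk
  induction k with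
  | zero => simpa using ⟨ha, hD⟩
  | succ k ih =>
    obtain ⟨hak, hDk⟩ := ih (by omega)
    have hDk1 : ‖Ring.inverse (a - p k • 1) - g (p k)‖ ≤ 1 :=
      hDk.trans (le_trans (by gcongr; exacts [by norm_num, by omega]) hε)
    obtain ⟨hak', hDk'⟩ := hg.isUnit_and_norm_inverse_sub_le_four_mul (hpS k (by omega))
      (hpS (k + 1) hk) (hgM _ (hpS k (by omega))) hak hDk1 (hp k hk)
    exact ⟨hak', hDk'.trans (by rw [pow_succ]; linarith)⟩

theorem IsPseudoResolventOn.isUnit_and_norm_inverse_sub_le_of_segment {a : R} {g : ℂ → R}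
    {S : Set ℂ} (hg : IsPseudoResolventOn g S) {M ε : ℝ} (hgM : ∀ η ∈ S, ‖g η‖ ≤ M) {ξ ζ : ℂ}
    (hseg : segment ℝ ξ ζ ⊆ S) {N : ℕ} (hN : ‖ζ - ξ‖ * (M + 1) ≤ N / 2)
    (ha : IsUnit (a - ξ • 1)) (hD : ‖Ring.inverse (a - ξ • 1) - g ξ‖ ≤ ε)
    (hε : 4 ^ N * ε ≤ 1) :
    IsUnit (a - ζ • 1) ∧ ‖Ring.inverse (a - ζ • 1) - g ζ‖ ≤ 4 ^ N * ε := by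
  have hM : 0 ≤ M := (norm_nonneg _).trans (hgM ξ (hseg (left_mem_segment ℝ ξ ζ)))
  rcases N.eq_zero_or_pos with rfl | hN0
  · have : ζ = ξ := by
      rw [← sub_eq_zero, ← norm_le_zero_iff]
      push_cast at hN
      nlinarith [norm_nonneg (ζ - ξ)]
    subst this
    simpa using ⟨ha, hD⟩
  set p : ℕ → ℂ := fun k => ξ + ((k : ℝ) / N) • (ζ - ξ)
  have hpS : ∀ k ≤ N, p k ∈ S := fun k hk => hseg <| by
    rw [segment_eq_image']
    exact ⟨(k : ℝ) / N,
      ⟨by positivity, div_le_one_of_le₀ (by exact_mod_cast hk) (by positivity)⟩, rfl⟩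
  have hp : ∀ k < N, ‖p (k + 1) - p k‖ * (M + 1) ≤ 1 / 2 := by
    intro k _
    have : p (k + 1) - p k = (1 / N : ℝ) • (ζ - ξ) := by
      simp only [p]; push_cast; rw [add_sub_add_left_eq_sub, ← sub_smul]; congr 1; field_simp; ring
    rw [this, norm_smul, Real.norm_of_nonneg (by positivity), mul_assoc, one_div_mul_eq_div,
      div_le_iff₀ (by exact_mod_cast hN0)]
    linarith
  have hpN : p N = ζ := by simp [p, hN0.ne']
  have := hg.isUnit_and_norm_inverse_sub_le_of_chain hgM hpS hp (by simpa [p] using ha)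
    (by simpa [p] using hD) hε N le_rfl
  rwa [hpN] at this

end Normed

end PseudoResolvent

theorem IsSelfAdjoint.isUnit_sub_smul_one {A : Type*} [CStarAlgebra A] {a : A}
    (ha : IsSelfAdjoint a) {η : ℂ} (hη : η.im ≠ 0) : IsUnit (a - η • 1) := by
  have : η ∉ spectrum ℂ a := fun hmem => hη (by rw [ha.mem_spectrum_eq_re hmem]; simp)
  rw [spectrum.notMem_iff, Algebra.algebraMap_eq_smul_one] at this
  simpa using this.neg

theorem mul_le_abs_im_add_smul_sub {z : ℂ} {s μ τ : ℝ} (hs : |s| = μ) (hsz : 0 ≤ s * z.im)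
    (hτ0 : 0 ≤ τ) (hτ1 : τ ≤ 1) : τ * μ ≤ |(z + τ • ((s : ℂ) * I - z)).im| := by
  have him : (z + τ • ((s : ℂ) * I - z)).im = (1 - τ) * z.im + τ * s := by simp; ring
  have hτs : τ * |s| = |τ * s| := by rw [abs_mul, abs_of_nonneg hτ0]
  rw [him, ← hs, hτs, ← sq_le_sq]
  nlinarith [mul_nonneg (mul_nonneg (sub_nonneg.mpr hτ1) hτ0) hsz]

theorem IsCompact.exists_isCompact_forall_segment_subset {K U : Set ℂ} (hK : IsCompact K)
    (hU : IsOpen U) (hKU : K ⊆ U) (hUim : ∀ η : ℂ, η.im ≠ 0 → η ∈ U) {μ : ℝ} (hμ : 0 < μ) :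
    ∃ T ⊆ U, IsCompact T ∧
      ∀ z ∈ K, ∃ s : ℝ, |s| = μ ∧ segment ℝ ((s : ℂ) * I) z ⊆ T := by
  obtain ⟨ε, hε, hεU⟩ := hK.exists_cthickening_subset_open hU hKU
  obtain ⟨R, hR0, hR⟩ := hK.isBounded.exists_pos_norm_le
  set L := μ + R
  refine ⟨cthickening ε K ∪ (closedBall 0 L ∩ {η | ε * μ / L ≤ |η.im|}), ?_, ?_, ?_⟩
  · refine Set.union_subset hεU fun η hη => hUim η ?_
    exact abs_pos.mp ((by positivity : 0 < ε * μ / L).trans_le hη.2)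
  · exact hK.cthickening.union
      ((isCompact_closedBall _ _).inter_right (isClosed_le continuous_const (by fun_prop)))
  intro z hz
  obtain ⟨s, hs, hsz⟩ : ∃ s : ℝ, |s| = μ ∧ 0 ≤ s * z.im := by
    rcases le_total 0 z.im with h | h
    · exact ⟨μ, abs_of_pos hμ, by positivity⟩
    · exact ⟨-μ, by simp [hμ.le], by nlinarith⟩
  refine ⟨s, hs, fun η hη => ?_⟩
  rw [segment_symm, segment_eq_image'] at hη
  obtain ⟨τ, ⟨hτ0, hτ1⟩, rfl⟩ := hη
  beta_reduce
  have hsI : ‖(s : ℂ) * I‖ = μ := by simp [hs]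
  have hstep : ‖τ • ((s : ℂ) * I - z)‖ ≤ τ * L := by
    rw [norm_smul, Real.norm_of_nonneg hτ0]
    gcongr
    exact (norm_sub_le _ _).trans (by rw [hsI]; linarith [hR z hz])
  -- the point at parameter `τ` is within `τ L` of `z ∈ K`, and `|Im| ≥ τ μ`
  by_cases hτ : τ * L ≤ ε
  · refine Or.inl (mem_cthickening_of_dist_le _ z ε K hz ?_)
    rw [dist_eq_norm, add_sub_cancel_left]
    linarith
  refine Or.inr ⟨?_, ?_⟩
  · have : z + τ • ((s : ℂ) * I - z) = (1 - τ) • z + τ • ((s : ℂ) * I) := by module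
    rw [mem_closedBall_zero_iff, this]
    refine (norm_add_le _ _).trans ?_
    rw [norm_smul, norm_smul, hsI, Real.norm_of_nonneg (by linarith), Real.norm_of_nonneg hτ0]
    nlinarith [hR z hz]
  · have hL : 0 < L := by positivity
    calc ε * μ / L ≤ τ * μ := by
          rw [div_le_iff₀ hL]; nlinarith [not_le.mp hτ]
      _ ≤ _ := mul_le_abs_im_add_smul_sub hs hsz hτ0 hτ1

theorem ContinuousLinearMap.norm_comp_comp_adjoint_le {E F : Type*} [NormedAddCommGroup E]
    [InnerProductSpace ℂ E] [CompleteSpace E] [NormedAddCommGroup F] [InnerProductSpace ℂ F]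
    [CompleteSpace F] {J : F →L[ℂ] E} (hJ : ‖J‖ ≤ 1) (X : F →L[ℂ] F) :
    ‖J ∘L X ∘L adjoint J‖ ≤ ‖X‖ :=
  calc ‖J ∘L X ∘L adjoint J‖ ≤ ‖J‖ * (‖X‖ * ‖adjoint J‖) :=
        (opNorm_comp_le _ _).trans (by gcongr; exact opNorm_comp_le _ _)
    _ ≤ 1 * (‖X‖ * 1) := by rw [adjoint.norm_map]; gcongr
    _ = ‖X‖ := by ring

theorem resolvent_convergence_sufficient_condition_general
    {H H₀ : Type*} [NormedAddCommGroup H] [InnerProductSpace ℂ H] [CompleteSpace H]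
    [NormedAddCommGroup H₀] [InnerProductSpace ℂ H₀] [CompleteSpace H₀]
    (J : H₀ →L[ℂ] H) (hJ : ∀ x, ‖J x‖ = ‖x‖)
    (A : ℝ → (H →L[ℂ] H))
    (B : H₀ →L[ℂ] H₀) (hB : IsSelfAdjoint B)
    (K : Set ℂ) (hK : IsCompact K)
    (hKB : ∀ z ∈ K, IsUnit (B - z • 1))
    (μ₀ ρ C' m₀' : ℝ) (hμ₀pos : 0 < μ₀) (hρ : 0 < ρ)
    (hres : ∀ m : ℝ, m > m₀' → ∀ ξ : ℂ, μ₀ ≤ |ξ.im| → |ξ.re| ≤ ρ →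
      IsUnit (A m - ξ • 1) ∧
      ‖Ring.inverse (A m - ξ • 1)
          - J ∘L Ring.inverse (B - ξ • 1) ∘L (adjoint J)‖ ≤ C' / Real.sqrt m) :
    ∃ m₀ C : ℝ, m₀ > m₀' ∧ 0 ≤ C ∧ ∀ m : ℝ, m > m₀ → ∀ z ∈ K,
      IsUnit (A m - z • 1) ∧
      ‖Ring.inverse (A m - z • 1)
          - J ∘L Ring.inverse (B - z • 1) ∘L (adjoint J)‖ ≤ C / Real.sqrt m := by
  obtain ⟨T, hTB, hT, hsegT⟩ := hK.exists_isCompact_forall_segment_subset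
    (isOpen_setOf_isUnit_sub_smul B) hKB (fun η hη => hB.isUnit_sub_smul_one hη) hμ₀pos
  obtain ⟨M, hM⟩ := hT.exists_bound_norm_inverse_sub_smul hTB
  have hG : IsPseudoResolventOn (fun η => J ∘L Ring.inverse (B - η • 1) ∘L adjoint J) T :=
    fun η hη ζ hζ => ((isPseudoResolventOn_inverse_sub_smul B).conj J (adjoint J)
      ((norm_map_iff_adjoint_comp_self J).mp hJ)) η (hTB hη) ζ (hTB hζ)
  have hGM (η : ℂ) (hη : η ∈ T) : ‖J ∘L Ring.inverse (B - η • 1) ∘L adjoint J‖ ≤ M :=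
    (norm_comp_comp_adjoint_le (J.opNorm_le_bound zero_le_one fun x => by rw [hJ, one_mul])
      _).trans (hM η hη)
  set N := ⌈2 * diam T * (M + 1)⌉₊
  set C := 4 ^ N * max C' 0
  refine ⟨max m₀' (C ^ 2) + 1, C, by linarith [le_max_left m₀' (C ^ 2)], by positivity,
    fun m hm z hz => ?_⟩
  obtain ⟨s, hs, hseg⟩ := hsegT z hz
  have hlen : ‖z - s * I‖ * (M + 1) ≤ N / 2 := by
    have hzT := hseg (right_mem_segment ℝ _ z)
    have hdiam := dist_le_diam_of_mem hT.isBounded hzT (hseg (left_mem_segment ℝ _ z))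
    have hM0 : 0 ≤ M := (norm_nonneg _).trans (hM z hzT)
    rw [← dist_eq_norm]
    nlinarith [Nat.le_ceil (2 * diam T * (M + 1))]
  have hCm : C < √m := (Real.lt_sqrt (by positivity)).mpr (by linarith [le_max_right m₀' (C ^ 2)])
  obtain ⟨hu, hD⟩ := hres m (by linarith [le_max_left m₀' (C ^ 2)]) (s * I) (by simp [hs])
    (by simp [hρ.le])
  have hε : 4 ^ N * (max C' 0 / √m) ≤ 1 := by
    rw [← mul_div_assoc, div_le_one ((by positivity : (0:ℝ) ≤ C).trans_lt hCm)]
    exact hCm.le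
  rw [mul_div_assoc]
  exact hG.isUnit_and_norm_inverse_sub_le_of_segment hGM hseg hlen hu
    (hD.trans (by gcongr; exact le_max_left _ _)) hε

/-- Lemma A.1 (sufficient condition): if the resolvent difference between the
self-adjoint operators `A_m` and `B ⊕ 0` is bounded by `C'/√m` uniformly on the
strip `{|Im ξ| ≥ μ₀, |Re ξ| ≤ ρ}`, where `μ₀ > max_{z ∈ K} |Im z|` and `ρ > 0`,
and `K` is a compact subset of the resolvent set of `B`, then for `m` large
every `z ∈ K` is in the resolvent set of `A_m` and the resolvent difference is
bounded by `C/√m` uniformly on `K`. -/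
theorem resolvent_convergence_sufficient_condition
    {H H₀ : Type*} [NormedAddCommGroup H] [InnerProductSpace ℂ H] [CompleteSpace H]
    [NormedAddCommGroup H₀] [InnerProductSpace ℂ H₀] [CompleteSpace H₀]
    (J : H₀ →L[ℂ] H) (hJ : ∀ x, ‖J x‖ = ‖x‖)
    (A : ℝ → (H →L[ℂ] H)) (hA : ∀ m, IsSelfAdjoint (A m))
    (B : H₀ →L[ℂ] H₀) (hB : IsSelfAdjoint B)
    (K : Set ℂ) (hK : IsCompact K)
    (hKB : ∀ z ∈ K, IsUnit (B - z • 1))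
    (μ₀ ρ C' m₀' : ℝ) (hμ₀pos : 0 < μ₀) (hμ₀ : ∀ z ∈ K, |z.im| < μ₀) (hρ : 0 < ρ)
    (hres : ∀ m : ℝ, m > m₀' → ∀ ξ : ℂ, μ₀ ≤ |ξ.im| → |ξ.re| ≤ ρ →
      IsUnit (A m - ξ • 1) ∧
      ‖Ring.inverse (A m - ξ • 1)
          - J ∘L Ring.inverse (B - ξ • 1) ∘L (adjoint J)‖ ≤ C' / Real.sqrt m) :
    ∃ m₀ C : ℝ, m₀ > m₀' ∧ 0 ≤ C ∧ ∀ m : ℝ, m > m₀ → ∀ z ∈ K,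
      IsUnit (A m - z • 1) ∧
      ‖Ring.inverse (A m - z • 1)
          - J ∘L Ring.inverse (B - z • 1) ∘L (adjoint J)‖ ≤ C / Real.sqrt m :=
  resolvent_convergence_sufficient_condition_general J hJ A B hB K hK hKB μ₀ ρ C' m₀' hμ₀pos hρ hres
end
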